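/- Assume furthermore E⁰_0 = 1, and let C : X⁺ → R be any function such that (i) C_λ = E¹_λ for every λ ∈ X⁺_red, and (ii) C satisfies the Steinberg tensor product identity C_λ = C_{λ⁰} · F(C_{λ¹}) · F²(C_{λ²}) ⋯ for every λ ∈ X⁺ (a product in which all but finitely many factors equal 1). Then C_λ = E^∞_λ for every λ ∈ X⁺. (In the paper, with p ≥ c_G, C_λ = [V_λ] is the formal character of the irreducible rational representation of highest weight λ, and this is the reformulated character formula [V_λ] = E^∞_λ.) -/

import Mathlib

/-!
Setting: `X⁺ = I → ℕ` (componentwise addition) for a finite index set `I`, `p ≥ 2`.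
`digit p lam k` is the `k`-th base-`p` digit `λ^k` of `lam` (so `λ^k ∈ X⁺_red` and
`lam = ∑_k p^k • λ^k`); `shift p k lam = ∑_{j≥k} p^{j-k} λ^j`;
`trunc p k lam = ∑_{0≤j≤k-1} p^j λ^j`.
-/

namespace LusztigChar

variable {I : Type*} [Fintype I] {R : Type*} [CommRing R]

/-- The `k`-th digit `λ^k` of `λ ∈ X⁺ = I → ℕ` in base `p`. -/
def digit (p : ℕ) (lam : I → ℕ) (k : ℕ) : I → ℕ := fun i => lam i / p ^ k % p

/-- `∑_{j≥k} p^{j-k} λ^j ∈ X⁺` (a sum with finitely many nonzero terms). -/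
noncomputable def shift (p k : ℕ) (lam : I → ℕ) : I → ℕ :=
  ∑ᶠ j : ℕ, p ^ j • digit p lam (k + j)

/-- `∑_{0≤j≤k-1} p^j λ^j ∈ X⁺`. -/
def trunc (p k : ℕ) (lam : I → ℕ) : I → ℕ :=
  ∑ j ∈ Finset.range k, p ^ j • digit p lam j

/-- The recursive family `E^k : X⁺ → R` built from `E⁰ = E0` and the integers
`p_{μ,λ} = P μ λ`:  `E^k_λ = ∑_μ p_{μ, ∑_{j≥k-1} p^{j-k+1} λ^j} · E^{k-1}_{∑_{0≤j≤k-2} p^j λ^j + p^{k-1} μ}`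
for `k ≥ 1`. -/
noncomputable def E (p : ℕ) (P : (I → ℕ) → (I → ℕ) → ℤ) (E0 : (I → ℕ) → R) :
    ℕ → (I → ℕ) → R
  | 0 => E0
  | k + 1 => fun lam =>
      ∑ᶠ mu : I → ℕ, P mu (shift p k lam) • E p P E0 k (trunc p k lam + p ^ k • mu)

/-!
Unfolding one step of the recursion and applying the Steinberg-type identity to `E¹` shows, by
induction on `k`, that `E^k_λ = ∏_{h<k} F^h(E¹_{λ^h}) · F^k(E⁰_{∑_{j≥k} p^{j-k} λ^j})`; the sums
over `μ` are finite because lower sets are, so `F^k` and multiplication pass through them. Once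
`p^k` exceeds every coordinate of `λ` the last factor is `F^k(E⁰_0) = 1`, and what remains is the
Steinberg product for `C`, since `C` agrees with `E¹` on restricted weights and `C_0 = E¹_0 = 1`.
-/

open Filter Function Finset

section Digits

variable {ι : Type*} {p : ℕ}

lemma eventually_forall_lt_pow [Finite ι] (hp : 1 < p) (lam : ι → ℕ) :
    ∀ᶠ k in atTop, ∀ i, lam i < p ^ k :=
  eventually_all.2 fun i => (tendsto_pow_atTop_atTop_of_one_lt hp).eventually_gt_atTop (lam i)

lemma digit_lt (hp : 0 < p) (lam : ι → ℕ) (k : ℕ) (i : ι) : digit p lam k i < p :=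
  Nat.mod_lt _ hp

lemma digit_eq_zero_of_le (hp : 0 < p) {lam : ι → ℕ} {k j : ℕ} (hlam : ∀ i, lam i < p ^ k)
    (hkj : k ≤ j) : digit p lam j = 0 := by
  ext i
  simp [digit, Nat.div_eq_of_lt ((hlam i).trans_le (Nat.pow_le_pow_right hp hkj))]

lemma digit_eq_of_mod_eq {lam mu : ι → ℕ} {k : ℕ}
    (h : ∀ i, lam i % p ^ (k + 1) = mu i % p ^ (k + 1)) : digit p lam k = digit p mu k := by
  ext i
  simp only [digit, ← Nat.mod_mul_right_div_self, ← pow_succ, h i]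

lemma trunc_apply (p k : ℕ) (lam : ι → ℕ) (i : ι) : trunc p k lam i = lam i % p ^ k := by
  induction k with
  | zero => simp [trunc, Nat.mod_one]
  | succ k ih =>
    rw [Nat.mod_pow_succ, ← ih]
    simp [trunc, sum_range_succ, digit]

lemma shift_apply [Finite ι] (hp : 1 < p) (k : ℕ) (lam : ι → ℕ) (i : ι) :
    shift p k lam i = lam i / p ^ k := by
  obtain ⟨L, hL⟩ := (eventually_forall_lt_pow hp lam).exists
  have hdigit : ∀ j, digit p lam (k + j) = digit p (fun i => lam i / p ^ k) j := fun j => by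
    ext i
    simp [digit, pow_add, Nat.div_div_eq_div_mul]
  have hsupp : support (fun j => p ^ j • digit p lam (k + j)) ⊆ range L := fun j hj => by
    by_contra hjL
    rw [coe_range, Set.mem_Iio, not_lt] at hjL
    exact hj (by simp only [digit_eq_zero_of_le (j := k + j) (by omega) hL (by omega), smul_zero])
  rw [shift, finsum_eq_sum_of_support_subset _ hsupp]
  simp_rw [hdigit]
  change trunc p L _ i = _
  rw [trunc_apply, Nat.mod_eq_of_lt ((Nat.div_le_self _ _).trans_lt (hL i))]

lemma shift_zero [Finite ι] (hp : 1 < p) (lam : ι → ℕ) : shift p 0 lam = lam := by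
  ext i
  simp [shift_apply hp]

lemma shift_shift [Finite ι] (hp : 1 < p) (k m : ℕ) (lam : ι → ℕ) :
    shift p m (shift p k lam) = shift p (k + m) lam := by
  ext i
  simp [shift_apply hp, Nat.div_div_eq_div_mul, pow_add]

lemma digit_shift [Finite ι] (hp : 1 < p) (k j : ℕ) (lam : ι → ℕ) :
    digit p (shift p k lam) j = digit p lam (k + j) := by
  ext i
  simp [digit, shift_apply hp, Nat.div_div_eq_div_mul, pow_add]

lemma shift_eq_zero [Finite ι] (hp : 1 < p) {k : ℕ} {lam : ι → ℕ} (hlam : ∀ i, lam i < p ^ k) :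
    shift p k lam = 0 := by
  ext i
  simp [shift_apply hp, Nat.div_eq_of_lt (hlam i)]

lemma digit_trunc_add {k h : ℕ} (hh : h < k) (lam mu : ι → ℕ) :
    digit p (trunc p k lam + p ^ k • mu) h = digit p lam h := by
  refine digit_eq_of_mod_eq fun i => ?_
  have hdvd : p ^ (h + 1) ∣ p ^ k := pow_dvd_pow p hh
  simp [trunc_apply, Nat.add_mod, Nat.mod_mod_of_dvd _ hdvd,
    Nat.mod_eq_zero_of_dvd (hdvd.mul_right (mu i))]

lemma shift_trunc_add [Finite ι] (hp : 1 < p) (k : ℕ) (lam mu : ι → ℕ) :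
    shift p k (trunc p k lam + p ^ k • mu) = mu := by
  ext i
  have hpk : 0 < p ^ k := by positivity
  simp [shift_apply hp, trunc_apply, Nat.add_mul_div_left _ _ hpk,
    Nat.div_eq_of_lt (Nat.mod_lt _ hpk)]

end Digits

lemma apply_le_of_eq_zero {ι : Type*} (N : (ι → ℕ) →+ ℕ) (hN_zero : ∀ a, N a = 0 → a = 0)
    (mu : ι → ℕ) (i : ι) : mu i ≤ N mu := by
  classical
  have hsingle : 1 ≤ N (Pi.single i 1) :=
    Nat.one_le_iff_ne_zero.2 fun h => by simpa using congrFun (hN_zero _ h) i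
  have hle : mu i • Pi.single i 1 ≤ mu := fun j => by
    by_cases hj : j = i <;> simp [hj]
  calc mu i ≤ mu i * N (Pi.single i 1) := Nat.le_mul_of_pos_right _ hsingle
    _ = N (mu i • Pi.single i 1) := by rw [map_nsmul, smul_eq_mul]
    _ ≤ N (mu - mu i • Pi.single i 1) + N (mu i • Pi.single i 1) := Nat.le_add_left _ _
    _ = N mu := by rw [← map_add, tsub_add_cancel_of_le hle]

lemma finite_setOf_le {ι : Type*} [Finite ι] (le : (ι → ℕ) → (ι → ℕ) → Prop) (N : (ι → ℕ) →+ ℕ)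
    (hN_zero : ∀ a, N a = 0 → a = 0) (hN_mono : ∀ a b, le a b → N a ≤ N b) (ν : ι → ℕ) :
    {mu | le mu ν}.Finite :=
  (Set.Finite.pi fun _ => Set.finite_Iic (N ν)).subset fun mu hmu i _ =>
    (apply_le_of_eq_zero N hN_zero mu i).trans (hN_mono _ _ hmu)

section Recursion

variable {ι R : Type*} [Finite ι] [CommRing R] {p : ℕ} {P : (ι → ℕ) → (ι → ℕ) → ℤ}
  {E0 : (ι → ℕ) → R}

lemma E_one_apply (hp : 1 < p) (ν : ι → ℕ) : E p P E0 1 ν = ∑ᶠ mu, P mu ν • E0 mu := by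
  simp [E, shift_zero hp, trunc]

lemma E_one_zero (hp : 1 < p) (hP0 : ∀ mu, P mu 0 ≠ 0 → mu = 0) (hP00 : P 0 0 = 1)
    (hE00 : E0 0 = 1) : E p P E0 1 0 = 1 := by
  rw [E_one_apply hp, finsum_eq_single _ 0 fun mu hmu => by
    rw [not_not.1 (mt (hP0 mu) hmu), zero_smul]]
  simp [hP00, hE00]

theorem E_eq_prod_mul (hp : 1 < p) (hPfin : ∀ ν, (fun mu => P mu ν).HasFiniteSupport)
    (F : R →+* R)
    (hSteinberg : ∀ lam : ι → ℕ,
      E p P E0 1 lam = E p P E0 1 (digit p lam 0) * F (E0 (shift p 1 lam)))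
    (k : ℕ) (lam : ι → ℕ) :
    E p P E0 k lam =
      (∏ h ∈ range k, (⇑F)^[h] (E p P E0 1 (digit p lam h))) * (⇑F)^[k] (E0 (shift p k lam)) := by
  induction k generalizing lam with
  | zero => simp [E, shift_zero hp]
  | succ k ih =>
    set Q := ∏ h ∈ range k, (⇑F)^[h] (E p P E0 1 (digit p lam h))
    have hterm : ∀ mu, E p P E0 k (trunc p k lam + p ^ k • mu) = Q * (F ^ k) (E0 mu) := by
      intro mu
      rw [ih, shift_trunc_add hp, RingHom.coe_pow]
      congr 1
      exact prod_congr rfl fun h hh => by rw [digit_trunc_add (mem_range.1 hh)]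
    calc E p P E0 (k + 1) lam
        = ∑ᶠ mu, P mu (shift p k lam) • (Q * (F ^ k) (E0 mu)) := by simp only [E, hterm]
      _ = Q * (F ^ k) (∑ᶠ mu, P mu (shift p k lam) • E0 mu) := by
        rw [map_finsum (F ^ k) (f := fun mu => P mu _ • E0 mu) ((hPfin _).smul_left E0),
          mul_finsum' (fun mu => (F ^ k) (P mu _ • E0 mu)) Q
            (((hPfin _).smul_left E0).comp (map_zero _))]
        simp only [map_zsmul, mul_smul_comm]
      _ = Q * (F ^ k) (E p P E0 1 (shift p k lam)) := by rw [E_one_apply hp]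
      _ = _ := by
        rw [hSteinberg, digit_shift hp, add_zero, shift_shift hp, map_mul, RingHom.coe_pow,
          prod_range_succ, ← iterate_succ_apply F k, mul_assoc]

end Recursion

lemma finprod_iterate_digit_eq_prod {ι M G : Type*} [CommMonoid M] [FunLike G M M]
    [OneHomClass G M M] (F : G) {f : (ι → ℕ) → M} (hf : f 0 = 1) {p k : ℕ} (hp : 0 < p)
    {lam : ι → ℕ} (hlam : ∀ i, lam i < p ^ k) :
    ∏ᶠ h, (⇑F)^[h] (f (digit p lam h)) = ∏ h ∈ range k, (⇑F)^[h] (f (digit p lam h)) := by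
  refine finprod_eq_prod_of_mulSupport_subset _ fun h hh => ?_
  by_contra hhk
  rw [coe_range, Set.mem_Iio, not_lt] at hhk
  exact hh (by simp only [digit_eq_zero_of_le hp hlam hhk, hf, iterate_map_one])

theorem char_eq_Einf_general {I : Type*} [Fintype I] {R : Type*} [CommRing R]
    (p : ℕ) (hp : 2 ≤ p)
    (le : (I → ℕ) → (I → ℕ) → Prop)
    (N : (I → ℕ) →+ ℕ)
    (hN_zero : ∀ a, N a = 0 → a = 0)
    (hN_mono : ∀ a b, le a b → N a ≤ N b)
    (P : (I → ℕ) → (I → ℕ) → ℤ)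
    (hP_le : ∀ mu lam, P mu lam ≠ 0 → le mu lam)
    (hP_diag : ∀ lam, P lam lam = 1)
    (E0 : (I → ℕ) → R) (hE00 : E0 0 = 1)
    (Einf : (I → ℕ) → R)
    (hEinf : ∀ lam, ∃ n : ℕ, ∀ k, n ≤ k → E p P E0 k lam = Einf lam)
    (F : R →+* R)
    (hSteinberg : ∀ lam : I → ℕ,
      E p P E0 1 lam = E p P E0 1 (digit p lam 0) * F (E0 (shift p 1 lam)))
    (C : (I → ℕ) → R)
    (hC_red : ∀ lam : I → ℕ, (∀ i, lam i ≤ p - 1) → C lam = E p P E0 1 lam)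
    (hC_steinberg : ∀ lam : I → ℕ, C lam = ∏ᶠ h : ℕ, (⇑F)^[h] (C (digit p lam h))) :
    ∀ lam : I → ℕ, C lam = Einf lam := by
  have hPfin : ∀ ν, (fun mu => P mu ν).HasFiniteSupport := fun ν =>
    (finite_setOf_le le N hN_zero hN_mono ν).subset fun mu => hP_le mu ν
  have hP0 : ∀ mu, P mu 0 ≠ 0 → mu = 0 := fun mu h =>
    hN_zero mu (Nat.le_zero.1 ((hN_mono _ _ (hP_le mu 0 h)).trans_eq (map_zero N)))
  have hC0 : C 0 = 1 := by rw [hC_red 0 (by simp), E_one_zero hp hP0 (hP_diag 0) hE00]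
  intro lam
  obtain ⟨k, hk_lt, hk_E⟩ :=
    ((eventually_forall_lt_pow hp lam).and (eventually_atTop.2 (hEinf lam))).exists
  rw [← hk_E, E_eq_prod_mul hp hPfin F hSteinberg, shift_eq_zero hp hk_lt, hE00, iterate_map_one,
    mul_one, hC_steinberg, finprod_iterate_digit_eq_prod F hC0 (by omega) hk_lt]
  exact prod_congr rfl fun h _ => by
    rw [hC_red _ fun i => Nat.le_sub_one_of_lt (digit_lt (by omega) lam h i)]

/-- paper 7(b): assume `E⁰_0 = 1` and the Steinberg-type identity, and let
`C : X⁺ → R` satisfy (i) `C_λ = E¹_λ` for `λ ∈ X⁺_red` and (ii) the Steinberg tensor product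
identity `C_λ = C_{λ⁰} · F(C_{λ¹}) · F²(C_{λ²}) ⋯`. Then `C_λ = E^∞_λ` for all `λ ∈ X⁺`. -/
theorem char_eq_Einf {I : Type*} [Fintype I] {R : Type*} [CommRing R]
    (p : ℕ) (hp : 2 ≤ p)
    (le : (I → ℕ) → (I → ℕ) → Prop)
    (hle_refl : ∀ a, le a a)
    (hle_antisymm : ∀ a b, le a b → le b a → a = b)
    (hle_trans : ∀ a b c, le a b → le b c → le a c)
    (N : (I → ℕ) →+ ℕ)
    (hN_zero : ∀ a, N a = 0 → a = 0)
    (hN_mono : ∀ a b, le a b → N a ≤ N b)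
    (P : (I → ℕ) → (I → ℕ) → ℤ)
    (hP_le : ∀ mu lam, P mu lam ≠ 0 → le mu lam)
    (hP_diag : ∀ lam, P lam lam = 1)
    (E0 : (I → ℕ) → R) (hE00 : E0 0 = 1)
    (Einf : (I → ℕ) → R)
    (hEinf : ∀ lam, ∃ n : ℕ, ∀ k, n ≤ k → E p P E0 k lam = Einf lam)
    (F : R →+* R)
    (hSteinberg : ∀ lam : I → ℕ,
      E p P E0 1 lam = E p P E0 1 (digit p lam 0) * F (E0 (shift p 1 lam)))
    (C : (I → ℕ) → R)
    (hC_red : ∀ lam : I → ℕ, (∀ i, lam i ≤ p - 1) → C lam = E p P E0 1 lam)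
    (hC_steinberg : ∀ lam : I → ℕ, C lam = ∏ᶠ h : ℕ, (⇑F)^[h] (C (digit p lam h))) :
    ∀ lam : I → ℕ, C lam = Einf lam :=
  char_eq_Einf_general p hp le N hN_zero hN_mono P hP_le hP_diag E0 hE00 Einf hEinf F hSteinberg C
    hC_red hC_steinberg

end LusztigChar
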